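/- Sylvester's identity: Let $q, x$ be complex numbers with $|q| < 1$ and such that $(xq^{k+1};q)_\infty \ne 0$ for all $k \ge 0$. Then $\sum_{k=0}^{\infty} \frac{(-1)^k x^k q^{k(3k+1)/2} (1 - xq^{2k+1})}{(q;q)_k \, (xq^{k+1};q)_\infty} = 1$ (the series converges since $|q|<1$). -/

import Mathlib

set_option autoImplicit false

/-- The q-shifted factorial `(a;q)_n = ∏_{j=0}^{n-1} (1 - a q^j)`. -/
noncomputable def qPoch (q a : ℂ) (n : ℕ) : ℂ := ∏ j ∈ Finset.range n, (1 - a * q ^ j)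

/-- The infinite q-shifted factorial `(a;q)_∞ = ∏_{j=0}^{∞} (1 - a q^j)`. -/
noncomputable def qPochInf (q a : ℂ) : ℂ := ∏' j : ℕ, (1 - a * q ^ j)

/-!
Put `F(y) = ∑ₖ (-1)ᵏ yᵏ q^{k(3k+1)/2} (1 - y q^{2k+1}) (yq;q)ₖ / (q;q)ₖ`. Its terms `Tₖ(y)` satisfy
`Tₖ(y) - (1 - yq) Tₖ(yq) = bₖ - bₖ₊₁` with `bₖ = (-1)ᵏ (1 - qᵏ) yᵏ q^{k(3k+1)/2} (yq;q)ₖ / (q;q)ₖ`,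
so `b₀ = 0` and `bₖ → 0` give `F(y) = (1 - yq) F(yq)`. Iterating, `F(y) = (yq;q)ₙ F(yqⁿ)`, and since
`F` is continuous at `0` with `F(0) = 1` (the series converges uniformly on discs, its terms being
`O(Rᵏ |q|^{k²})`), `F(y) = (yq;q)_∞`. The theorem is `F(x) / (xq;q)_∞ = 1`, after splitting
`(xq;q)_∞ = (xq;q)ₖ (xq^{k+1};q)_∞` in the `k`-th term.
-/

open Filter Finset Topology Metric

section QPochhammer

variable {q : ℂ}

theorem norm_mul_pow_le (hq : ‖q‖ ≤ 1) (a : ℂ) (n : ℕ) : ‖a * q ^ n‖ ≤ ‖a‖ := by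
  rw [norm_mul, norm_pow]
  exact mul_le_of_le_one_right (norm_nonneg a) (pow_le_one₀ (norm_nonneg q) hq)

theorem qPoch_zero (q a : ℂ) : qPoch q a 0 = 1 := prod_range_zero _

theorem qPoch_succ (q a : ℂ) (n : ℕ) : qPoch q a (n + 1) = qPoch q a n * (1 - a * q ^ n) :=
  prod_range_succ _ _

theorem qPoch_succ' (q a : ℂ) (n : ℕ) : qPoch q a (n + 1) = (1 - a) * qPoch q (a * q) n := by
  rw [qPoch, qPoch, prod_range_succ', mul_comm]
  simp only [pow_succ', pow_zero, mul_one, mul_assoc]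

@[fun_prop]
theorem continuous_qPoch (q : ℂ) (n : ℕ) : Continuous fun a ↦ qPoch q a n := by
  unfold qPoch; fun_prop

theorem norm_qPoch_le (hq : ‖q‖ ≤ 1) (a : ℂ) (n : ℕ) : ‖qPoch q a n‖ ≤ (1 + ‖a‖) ^ n := by
  have hfactor (j : ℕ) : ‖1 - a * q ^ j‖ ≤ 1 + ‖a‖ :=
    calc ‖1 - a * q ^ j‖ ≤ 1 + ‖a * q ^ j‖ := by simpa using norm_sub_le (1 : ℂ) (a * q ^ j)
      _ ≤ 1 + ‖a‖ := by gcongr; exact norm_mul_pow_le hq a j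
  calc ‖qPoch q a n‖ = ∏ j ∈ range n, ‖1 - a * q ^ j‖ := norm_prod _ _
    _ ≤ ∏ _j ∈ range n, (1 + ‖a‖) := prod_le_prod (fun _ _ ↦ norm_nonneg _) fun j _ ↦ hfactor j
    _ = (1 + ‖a‖) ^ n := by rw [prod_const, card_range]

theorem one_sub_norm_pow_le_norm_qPoch_self (hq : ‖q‖ ≤ 1) (n : ℕ) :
    (1 - ‖q‖) ^ n ≤ ‖qPoch q q n‖ := by
  have hfactor (j : ℕ) : 1 - ‖q‖ ≤ ‖1 - q * q ^ j‖ :=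
    calc 1 - ‖q‖ ≤ 1 - ‖q * q ^ j‖ := by gcongr; exact norm_mul_pow_le hq q j
      _ ≤ ‖1 - q * q ^ j‖ := by simpa using norm_sub_norm_le (1 : ℂ) (q * q ^ j)
  calc (1 - ‖q‖) ^ n = ∏ _j ∈ range n, (1 - ‖q‖) := by rw [prod_const, card_range]
    _ ≤ ∏ j ∈ range n, ‖1 - q * q ^ j‖ :=
      prod_le_prod (fun _ _ ↦ sub_nonneg.2 hq) fun j _ ↦ hfactor j
    _ = ‖qPoch q q n‖ := (norm_prod _ _).symm

theorem qPoch_self_ne_zero (hq : ‖q‖ < 1) (n : ℕ) : qPoch q q n ≠ 0 :=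
  norm_pos_iff.1 <|
    (pow_pos (sub_pos.2 hq) n).trans_le (one_sub_norm_pow_le_norm_qPoch_self hq.le n)

theorem multipliable_one_sub_mul_pow (hq : ‖q‖ < 1) (a : ℂ) :
    Multipliable fun j : ℕ ↦ 1 - a * q ^ j := by
  have h : Summable fun j : ℕ ↦ -a * q ^ j := (summable_geometric_of_norm_lt_one hq).mul_left (-a)
  simpa only [neg_mul, ← sub_eq_add_neg] using Complex.multipliable_one_add_of_summable h

theorem qPoch_mul_qPochInf (hq : ‖q‖ < 1) (a : ℂ) (n : ℕ) :
    qPoch q a n * qPochInf q (a * q ^ n) = qPochInf q a := by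
  have htail : Multipliable fun j ↦ 1 - a * q ^ (j + n) :=
    (multipliable_one_sub_mul_pow hq (a * q ^ n)).congr fun j ↦ by ring
  rw [qPoch, qPochInf, qPochInf,
    ← Multipliable.prod_mul_tprod_nat_mul' (f := fun j ↦ 1 - a * q ^ j) htail]
  congr 1
  exact tprod_congr fun j ↦ by ring

theorem tendsto_qPoch_qPochInf (hq : ‖q‖ < 1) (a : ℂ) :
    Tendsto (qPoch q a) atTop (𝓝 (qPochInf q a)) :=
  (multipliable_one_sub_mul_pow hq a).hasProd.tendsto_prod_nat

end QPochhammer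

theorem pentagonal_neg_natCast (k : ℕ) : pentagonal (-k) = k * (3 * k + 1) / 2 := by
  rw [pentagonal_neg, ← Int.toNat_natCast (k * (3 * k + 1) / 2)]
  push_cast
  rfl

theorem pentagonal_neg_natCast_succ (k : ℕ) :
    pentagonal (-(k + 1 : ℕ)) = pentagonal (-k) + (3 * k + 2) := by
  have hk := two_mul_natCast_pentagonal_neg k
  have hk₁ := two_mul_natCast_pentagonal_neg (k + 1 : ℕ)
  push_cast at hk₁ ⊢
  ring_nf at hk hk₁ ⊢
  omega

theorem mul_self_le_pentagonal_neg_natCast (k : ℕ) : k * k ≤ pentagonal (-k) := by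
  have hk := two_mul_natCast_pentagonal_neg k
  zify
  nlinarith

theorem summable_mul_pow_pow (s : ℝ) {t : ℝ} (ht₀ : 0 ≤ t) (ht₁ : t < 1) :
    Summable fun k : ℕ ↦ (s * t ^ k) ^ k := by
  have hsmall : ∀ᶠ k : ℕ in atTop, ‖s * t ^ k‖ ≤ 1 / 2 := by
    have := ((tendsto_pow_atTop_nhds_zero_of_lt_one ht₀ ht₁).const_mul s).norm
    simp only [mul_zero, norm_zero] at this
    exact this.eventually (eventually_le_nhds one_half_pos)
  refine Summable.of_norm_bounded_eventually_nat summable_geometric_two ?_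
  filter_upwards [hsmall] with k hk
  rw [norm_pow]
  gcongr

namespace Sylvester

variable {q : ℂ}

noncomputable def weight (q y : ℂ) (k : ℕ) : ℂ :=
  y ^ k * q ^ pentagonal (-k) * qPoch q (y * q) k / qPoch q q k

noncomputable def summand (q y : ℂ) (k : ℕ) : ℂ :=
  (-1) ^ k * (1 - y * q ^ (2 * k + 1)) * weight q y k

theorem summand_sub_mul_summand (hq : ‖q‖ < 1) (y : ℂ) (k : ℕ) :
    summand q y k - (1 - y * q) * summand q (y * q) k =
      (-1) ^ k * (1 - q ^ k) * weight q y k -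
        (-1) ^ (k + 1) * (1 - q ^ (k + 1)) * weight q y (k + 1) := by
  have hk := qPoch_self_ne_zero hq k
  have hk₁ : 1 - q * q ^ k ≠ 0 :=
    right_ne_zero_of_mul (qPoch_succ q q k ▸ qPoch_self_ne_zero hq (k + 1))
  have hshift : (1 - y * q) * summand q (y * q) k = (-1) ^ k * (1 - y * q ^ (2 * k + 2)) *
      (y * q) ^ k * q ^ pentagonal (-k) * qPoch q (y * q) (k + 1) / qPoch q q k := by
    rw [qPoch_succ', summand, weight]
    ring
  rw [hshift]
  simp only [summand, weight, pentagonal_neg_natCast_succ, qPoch_succ _ _ k]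
  field_simp
  ring

theorem norm_weight_le (hq : ‖q‖ < 1) {y : ℂ} {R : ℝ} (hy : ‖y‖ ≤ R) (k : ℕ) :
    ‖weight q y k‖ ≤ (R * (1 + R) / (1 - ‖q‖) * ‖q‖ ^ k) ^ k := by
  have hR : 0 ≤ R := (norm_nonneg y).trans hy
  have hpow : ‖q‖ ^ pentagonal (-k) ≤ (‖q‖ ^ k) ^ k := by
    rw [← pow_mul]
    exact pow_le_pow_of_le_one (norm_nonneg q) hq.le (mul_self_le_pentagonal_neg_natCast k)
  have hnum : ‖qPoch q (y * q) k‖ ≤ (1 + R) ^ k := by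
    refine (norm_qPoch_le hq.le _ k).trans ?_
    gcongr
    simpa using (norm_mul_pow_le hq.le y 1).trans hy
  have hden := one_sub_norm_pow_le_norm_qPoch_self hq.le k
  calc ‖weight q y k‖ = ‖y‖ ^ k * ‖q‖ ^ pentagonal (-k) * ‖qPoch q (y * q) k‖ / ‖qPoch q q k‖ := by
        simp only [weight, norm_div, norm_mul, norm_pow]
    _ ≤ R ^ k * (‖q‖ ^ k) ^ k * (1 + R) ^ k / (1 - ‖q‖) ^ k := by gcongr
    _ = (R * (1 + R) / (1 - ‖q‖) * ‖q‖ ^ k) ^ k := by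
        rw [mul_pow, div_pow, mul_pow]
        ring

theorem norm_summand_le (hq : ‖q‖ < 1) {y : ℂ} {R : ℝ} (hy : ‖y‖ ≤ R) (k : ℕ) :
    ‖summand q y k‖ ≤ (1 + R) * (R * (1 + R) / (1 - ‖q‖) * ‖q‖ ^ k) ^ k := by
  have hfactor : ‖1 - y * q ^ (2 * k + 1)‖ ≤ 1 + R :=
    calc ‖1 - y * q ^ (2 * k + 1)‖ ≤ 1 + ‖y * q ^ (2 * k + 1)‖ := by
          simpa using norm_sub_le (1 : ℂ) (y * q ^ (2 * k + 1))
      _ ≤ 1 + R := by gcongr; exact (norm_mul_pow_le hq.le y _).trans hy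
  rw [summand, norm_mul, norm_mul, norm_pow, norm_neg, norm_one, one_pow, one_mul]
  exact mul_le_mul hfactor (norm_weight_le hq hy k) (norm_nonneg _) (by linarith [norm_nonneg y])

theorem summable_summand (hq : ‖q‖ < 1) (y : ℂ) : Summable (summand q y) :=
  .of_norm_bounded ((summable_mul_pow_pow _ (norm_nonneg q) hq).mul_left _)
    (norm_summand_le hq le_rfl)

theorem continuousOn_tsum_summand (hq : ‖q‖ < 1) (R : ℝ) :
    ContinuousOn (fun y ↦ ∑' k, summand q y k) (closedBall 0 R) :=
  continuousOn_tsum (fun k ↦ by unfold summand weight; fun_prop)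
    ((summable_mul_pow_pow _ (norm_nonneg q) hq).mul_left _)
    fun k _ hy ↦ norm_summand_le hq (mem_closedBall_zero_iff.1 hy) k

theorem tsum_summand_zero (q : ℂ) : ∑' k, summand q 0 k = 1 := by
  rw [tsum_eq_single 0 fun k hk ↦ by simp [summand, weight, hk]]
  simp [summand, weight, qPoch_zero, pentagonal]

theorem tendsto_one_sub_pow_mul_weight (hq : ‖q‖ < 1) (y : ℂ) :
    Tendsto (fun n ↦ (-1) ^ n * (1 - q ^ n) * weight q y n) atTop (𝓝 0) := by
  have hbound (n : ℕ) : ‖(-1) ^ n * (1 - q ^ n) * weight q y n‖ ≤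
      2 * (‖y‖ * (1 + ‖y‖) / (1 - ‖q‖) * ‖q‖ ^ n) ^ n := by
    have h₂ : ‖1 - q ^ n‖ ≤ 2 := by
      have := norm_sub_le (1 : ℂ) (q ^ n)
      rw [norm_one, norm_pow] at this
      linarith [pow_le_one₀ (norm_nonneg q) hq.le (n := n)]
    rw [norm_mul, norm_mul, norm_pow, norm_neg, norm_one, one_pow, one_mul]
    exact mul_le_mul h₂ (norm_weight_le hq le_rfl n) (norm_nonneg _) zero_le_two
  refine squeeze_zero_norm hbound ?_
  simpa using ((summable_mul_pow_pow _ (norm_nonneg q) hq).tendsto_atTop_zero).const_mul 2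

theorem tsum_summand_eq_mul_tsum_summand (hq : ‖q‖ < 1) (y : ℂ) :
    ∑' k, summand q y k = (1 - y * q) * ∑' k, summand q (y * q) k := by
  have hpartial (n : ℕ) : ∑ k ∈ range n, (summand q y k - (1 - y * q) * summand q (y * q) k) =
      -((-1) ^ n * (1 - q ^ n) * weight q y n) := by
    simp only [summand_sub_mul_summand hq, sum_range_sub', pow_zero, sub_self, mul_zero, zero_mul,
      zero_sub]
  have hsum := (summable_summand hq y).hasSum.sub ((summable_summand hq (y * q)).hasSum.mul_left
    (1 - y * q))
  have hlim := hsum.tendsto_sum_nat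
  simp only [hpartial] at hlim
  have hb := (tendsto_one_sub_pow_mul_weight hq y).neg
  rw [neg_zero] at hb
  exact sub_eq_zero.1 (tendsto_nhds_unique hlim hb)

theorem tsum_summand_eq_qPoch_mul (hq : ‖q‖ < 1) (y : ℂ) (n : ℕ) :
    ∑' k, summand q y k = qPoch q (y * q) n * ∑' k, summand q (y * q ^ n) k := by
  induction n with
  | zero => simp [qPoch_zero]
  | succ n ih =>
    rw [ih, tsum_summand_eq_mul_tsum_summand hq (y * q ^ n), qPoch_succ, ← mul_assoc, pow_succ,
      ← mul_assoc]
    ring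

theorem tendsto_tsum_summand_mul_pow (hq : ‖q‖ < 1) (y : ℂ) :
    Tendsto (fun n ↦ ∑' k, summand q (y * q ^ n) k) atTop (𝓝 1) := by
  have hto : Tendsto (fun n ↦ y * q ^ n) atTop (𝓝 0) := by
    simpa using (tendsto_pow_atTop_nhds_zero_of_norm_lt_one hq).const_mul y
  have hlim : Tendsto (fun n ↦ y * q ^ n) atTop (𝓝[closedBall 0 ‖y‖] 0) :=
    tendsto_nhdsWithin_iff.2
      ⟨hto, .of_forall fun n ↦ mem_closedBall_zero_iff.2 (norm_mul_pow_le hq.le y n)⟩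
  rw [← tsum_summand_zero q]
  exact ((continuousOn_tsum_summand hq ‖y‖) 0 (mem_closedBall_self (norm_nonneg y))).tendsto.comp
    hlim

theorem tsum_summand (hq : ‖q‖ < 1) (y : ℂ) : ∑' k, summand q y k = qPochInf q (y * q) := by
  have hlim := (tendsto_qPoch_qPochInf hq (y * q)).mul (tendsto_tsum_summand_mul_pow hq y)
  rw [mul_one] at hlim
  exact tendsto_nhds_unique (tendsto_const_nhds.congr (tsum_summand_eq_qPoch_mul hq y)) hlim

end Sylvester

/-- Sylvester's identity. -/
theorem sylvester_identity (q x : ℂ) (hq : ‖q‖ < 1)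
    (hden : ∀ k : ℕ, qPochInf q (x * q ^ (k + 1)) ≠ 0) :
    ∑' k : ℕ,
      (-1 : ℂ) ^ k * x ^ k * q ^ (k * (3 * k + 1) / 2) * (1 - x * q ^ (2 * k + 1)) /
        (qPoch q q k * qPochInf q (x * q ^ (k + 1)))
    = 1 := by
  have hP : qPochInf q (x * q) ≠ 0 := by simpa using hden 0
  calc _ = ∑' k, Sylvester.summand q x k / qPochInf q (x * q) := tsum_congr fun k ↦ by
          have hsplit := qPoch_mul_qPochInf hq (x * q) k
          rw [mul_assoc, ← pow_succ'] at hsplit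
          have hfin : qPoch q (x * q) k ≠ 0 := left_ne_zero_of_mul (hsplit ▸ hP)
          have hqq := qPoch_self_ne_zero hq k
          rw [← hsplit, Sylvester.summand, Sylvester.weight, pentagonal_neg_natCast]
          field_simp [hden k]
    _ = 1 := by rw [tsum_div_const, Sylvester.tsum_summand hq, div_self hP]
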